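/- Let A ⊆ 𝔸ⁿ be a variety whose irreducible components are affine d-planes. For each J ⊆ {1,…,n} with #J = d let A_J be the union of those components of A with minimal free variables {X_j : j ∈ J}. If for each J the set E(A_J) of d-planes in D(A_J) consists of exactly m_J d-planes all parallel to ⊕_{j∈J} ℕe_j (m_J = number of components of A_J), then E(A) = ⋃_J E(A_J); in particular the number of d-planes in D(A) equals the total number of irreducible components of A. -/

import Mathlib

open MvPolynomial

/-- `β` is the leading exponent of `f` with respect to the monomial order `m`. -/
def IsLeadExp {σ : Type*} {k : Type*} [CommSemiring k] (m : MonomialOrder σ)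
    (f : MvPolynomial σ k) (β : σ →₀ ℕ) : Prop :=
  β ∈ f.support ∧ ∀ α ∈ f.support, α ≠ β → m.toSyn α < m.toSyn β

/-- `C(I)`: the set of leading exponents of nonzero elements of the ideal `I`. -/
def expC {σ : Type*} {k : Type*} [CommSemiring k] (m : MonomialOrder σ)
    (I : Ideal (MvPolynomial σ k)) : Set (σ →₀ ℕ) :=
  {β | ∃ f ∈ I, IsLeadExp m f β}

/-- `D(I)`: the standard set (set of exponents of standard monomials) of the ideal `I`. -/
def expD {σ : Type*} {k : Type*} [CommSemiring k] (m : MonomialOrder σ)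
    (I : Ideal (MvPolynomial σ k)) : Set (σ →₀ ℕ) :=
  (expC m I)ᶜ

/-- `{X_j : j ∈ J}` is a set of free variables of `A′ ⊆ kⁿ`: for every choice of values of
the coordinates in `J` there is a unique point of `A′` with these coordinates. -/
def IsFreeVars {k : Type*} [Field k] {n : ℕ} (A' : Set (Fin n → k)) (J : Finset (Fin n)) :
    Prop :=
  ∀ v : Fin n → k, ∃! x, x ∈ A' ∧ ∀ j ∈ J, x j = v j

/-- `{X_j : j ∈ J}` is the set of *minimal* free variables of `A′`: it is a set of free
variables, and no `j ∈ J` can be replaced by a smaller index `i ∉ J` so that the result is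
still a set of free variables. -/
def IsMinFreeVars {k : Type*} [Field k] {n : ℕ} (A' : Set (Fin n → k)) (J : Finset (Fin n)) :
    Prop :=
  IsFreeVars A' J ∧
    ∀ j ∈ J, ∀ i ∉ J, i < j → ¬ IsFreeVars A' (insert i (J.erase j))

/-- `A′` is a `d`-dimensional affine subspace of `kⁿ`. -/
def IsAffineDPlane {k : Type*} [Field k] {n : ℕ} (d : ℕ) (A' : Set (Fin n → k)) : Prop :=
  ∃ S : AffineSubspace k (Fin n → k),
    A' = (S : Set (Fin n → k)) ∧ A'.Nonempty ∧ Module.finrank k S.direction = d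

/-- The `d`-plane `γ + ⊕_{j∈J} ℕe_j` in `ℕⁿ` (for `γ` vanishing on `J`): the set of
exponents agreeing with `γ` outside `J`. -/
def dPlane {n : ℕ} (γ : Fin n →₀ ℕ) (J : Finset (Fin n)) : Set (Fin n →₀ ℕ) :=
  {β | ∀ i ∉ J, β i = γ i}

/-- The parameters `(J, γ)` of the `d`-planes contained in `δ`. -/
def planesIn {n : ℕ} (d : ℕ) (δ : Set (Fin n →₀ ℕ)) :
    Set (Finset (Fin n) × (Fin n →₀ ℕ)) :=
  {Jγ | Jγ.1.card = d ∧ (∀ j ∈ Jγ.1, Jγ.2 j = 0) ∧ dPlane Jγ.2 Jγ.1 ⊆ δ}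

/-- `E(δ)`: the union of all `d`-planes contained in `δ`. -/
def Eset {n : ℕ} (d : ℕ) (δ : Set (Fin n →₀ ℕ)) : Set (Fin n →₀ ℕ) :=
  ⋃ Jγ ∈ planesIn d δ, dPlane Jγ.2 Jγ.1

/-!
Since `A_J ⊆ A`, we have `D(A_J) ⊆ D(A)`. Conversely, let `γ + ⊕_{j∈J} ℕe_j ⊆ D(A)`. A component
`P` of `A` outside `A_J` has minimal free variables `J' ≠ J` with `#J' = #J`; pick `j ∈ J \ J'`.
On `P`, `X_j` is an affine function of the variables in `J'`, and minimality forces only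
variables smaller than `X_j` to occur in it, so `I(P)` contains a polynomial with leading
monomial `X_j`. If some `β` in the plane were the leading exponent of an `f ∈ I(A_J)`, then
multiplying `f` by one such polynomial for every component outside `A_J` would give an element
of `I(A)` whose leading exponent `β + ∑ e_j` still lies in the plane, which is absurd. So the
`d`-planes of `D(A)` with direction `J` are exactly those of `D(A_J)`, and both claims follow.
-/

section LeadingExponents

variable {σ k : Type*} [Field k] {m : MonomialOrder σ}

theorem isLeadExp_iff {f : MvPolynomial σ k} {β : σ →₀ ℕ} :
    IsLeadExp m f β ↔ f ≠ 0 ∧ m.degree f = β := by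
  constructor
  · rintro ⟨hβ, hlt⟩
    have hf : f ≠ 0 := by rintro rfl; simp at hβ
    refine ⟨hf, by_contra fun hne => ?_⟩
    exact (hlt _ (m.degree_mem_support hf) hne).not_ge (m.le_degree hβ)
  · rintro ⟨hf, rfl⟩
    exact ⟨m.degree_mem_support hf, fun α hα hne =>
      (m.le_degree hα).lt_of_ne fun h => hne (m.toSyn.injective h)⟩

theorem mem_expC_iff {I : Ideal (MvPolynomial σ k)} {β : σ →₀ ℕ} :
    β ∈ expC m I ↔ ∃ f ∈ I, f ≠ 0 ∧ m.degree f = β := by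
  simp only [expC, Set.mem_ofPred_eq, isLeadExp_iff]

theorem expD_anti {I I' : Ideal (MvPolynomial σ k)} (h : I ≤ I') : expD m I' ⊆ expD m I :=
  Set.compl_subset_compl.mpr fun _ ⟨f, hf, hlead⟩ => ⟨f, h hf, hlead⟩

theorem mul_mem_vanishingIdeal_union {A B : Set (σ → k)} {f g : MvPolynomial σ k}
    (hf : f ∈ vanishingIdeal k A) (hg : g ∈ vanishingIdeal k B) :
    f * g ∈ vanishingIdeal k (A ∪ B) := by
  rw [mem_vanishingIdeal_iff] at hf hg ⊢
  rintro x (hx | hx)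
  · rw [map_mul, hf x hx, zero_mul]
  · rw [map_mul, hg x hx, mul_zero]

theorem add_degree_mem_expC_vanishingIdeal {A A' B : Set (σ → k)} (hA : A ⊆ A' ∪ B)
    {β : σ →₀ ℕ} (hβ : β ∈ expC m (vanishingIdeal k A')) {h : MvPolynomial σ k}
    (hh : h ∈ vanishingIdeal k B) (hh0 : h ≠ 0) :
    β + m.degree h ∈ expC m (vanishingIdeal k A) := by
  obtain ⟨f, hf, hf0, rfl⟩ := mem_expC_iff.mp hβ
  exact mem_expC_iff.mpr ⟨f * h, vanishingIdeal_anti_mono hA (mul_mem_vanishingIdeal_union hf hh),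
    mul_ne_zero hf0 hh0, m.degree_mul hf0 hh0⟩

theorem exists_mem_vanishingIdeal_biUnion_degree_support_subset {ι : Type*} {J : Finset σ}
    (s : Finset ι) {P : ι → Set (σ → k)}
    (hP : ∀ c ∈ s, ∃ g ∈ vanishingIdeal k (P c), g ≠ 0 ∧ (m.degree g).support ⊆ J) :
    ∃ h ∈ vanishingIdeal k (⋃ c ∈ s, P c), h ≠ 0 ∧ (m.degree h).support ⊆ J := by
  classical
  induction s using Finset.induction_on with
  | empty => exact ⟨1, by simp, one_ne_zero, by simp⟩
  | insert c s _ ih =>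
    obtain ⟨g, hg, hg0, hgJ⟩ := hP c (Finset.mem_insert_self c s)
    obtain ⟨h, hh, hh0, hhJ⟩ := ih fun c' hc' => hP c' (Finset.mem_insert_of_mem hc')
    refine ⟨g * h, ?_, mul_ne_zero hg0 hh0, ?_⟩
    · rw [Finset.set_biUnion_insert]
      exact mul_mem_vanishingIdeal_union hg hh
    · rw [m.degree_mul hg0 hh0]
      exact Finsupp.support_add.trans (Finset.union_subset hgJ hhJ)

end LeadingExponents

section Planes

variable {n d : ℕ}

theorem add_mem_dPlane {γ β α : Fin n →₀ ℕ} {J : Finset (Fin n)} (hβ : β ∈ dPlane γ J)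
    (hα : α.support ⊆ J) : β + α ∈ dPlane γ J := fun i hi => by
  rw [Finsupp.add_apply, Finsupp.notMem_support_iff.mp fun h => hi (hα h), add_zero]
  exact hβ i hi

theorem eq_of_mem_dPlane {γ γ' : Fin n →₀ ℕ} {J : Finset (Fin n)} (h : γ ∈ dPlane γ' J)
    (hγ : ∀ j ∈ J, γ j = 0) (hγ' : ∀ j ∈ J, γ' j = 0) : γ = γ' := by
  ext i
  by_cases hi : i ∈ J
  · rw [hγ i hi, hγ' i hi]
  · exact h i hi

theorem Eset_subset (d : ℕ) (δ : Set (Fin n →₀ ℕ)) : Eset d δ ⊆ δ :=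
  Set.iUnion₂_subset fun _ hJγ => hJγ.2.2

theorem dPlane_subset_Eset {δ : Set (Fin n →₀ ℕ)} {J : Finset (Fin n)} {γ : Fin n →₀ ℕ}
    (h : (J, γ) ∈ planesIn d δ) : dPlane γ J ⊆ Eset d δ :=
  Set.subset_biUnion_of_mem (u := fun Jγ => dPlane Jγ.2 Jγ.1) h

theorem mem_planesIn_iff_of_Eset_eq {δ : Set (Fin n →₀ ℕ)} {J : Finset (Fin n)}
    {Γ : Finset (Fin n →₀ ℕ)} (hJ : J.card = d) (hΓ : ∀ γ ∈ Γ, ∀ j ∈ J, γ j = 0)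
    (hE : Eset d δ = ⋃ γ ∈ Γ, dPlane γ J) {γ : Fin n →₀ ℕ} :
    (J, γ) ∈ planesIn d δ ↔ γ ∈ Γ := by
  constructor
  · intro hplane
    have hγ : γ ∈ ⋃ γ' ∈ Γ, dPlane γ' J := hE ▸ dPlane_subset_Eset hplane fun _ _ => rfl
    obtain ⟨γ', hγ', hγγ'⟩ := Set.mem_iUnion₂.mp hγ
    rwa [eq_of_mem_dPlane hγγ' hplane.2.1 (hΓ γ' hγ')]
  · intro hγ
    refine ⟨hJ, hΓ γ hγ, ?_⟩
    calc dPlane γ J ⊆ ⋃ γ' ∈ Γ, dPlane γ' J := Set.subset_biUnion_of_mem (u := (dPlane · J)) hγ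
      _ = Eset d δ := hE.symm
      _ ⊆ δ := Eset_subset d δ

theorem planesIn_mono {δ δ' : Set (Fin n →₀ ℕ)} (h : δ ⊆ δ') : planesIn d δ ⊆ planesIn d δ' :=
  fun _ ⟨hJ, hγ, hsub⟩ => ⟨hJ, hγ, hsub.trans h⟩

theorem Eset_mono {δ δ' : Set (Fin n →₀ ℕ)} (h : δ ⊆ δ') : Eset d δ ⊆ Eset d δ' :=
  Set.biUnion_subset_biUnion_left (planesIn_mono h)

theorem Eset_eq_biUnion_of_mem_planesIn {δ : Set (Fin n →₀ ℕ)}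
    {δ' : Finset (Fin n) → Set (Fin n →₀ ℕ)} (hsub : ∀ J, δ' J ⊆ δ)
    (hplane : ∀ J γ, (J, γ) ∈ planesIn d δ → (J, γ) ∈ planesIn d (δ' J)) :
    Eset d δ = ⋃ J ∈ {J : Finset (Fin n) | J.card = d}, Eset d (δ' J) := by
  refine subset_antisymm ?_ (Set.iUnion₂_subset fun J _ => Eset_mono (hsub J))
  refine Set.iUnion₂_subset fun ⟨J, γ⟩ hJγ => ?_
  exact (dPlane_subset_Eset (hplane J γ hJγ)).trans
    (Set.subset_biUnion_of_mem (u := fun J => Eset d (δ' J)) hJγ.1)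

end Planes

theorem Set.ncard_setOf_fst_mem_snd_mem {α β : Type*} (s : Finset α) (t : α → Finset β) :
    {p : α × β | p.1 ∈ s ∧ p.2 ∈ t p.1}.ncard = ∑ a ∈ s, (t a).card := by
  have : {p : α × β | p.1 ∈ s ∧ p.2 ∈ t p.1} =
      ((s.sigma t).map (Equiv.sigmaEquivProd α β).toEmbedding : Set (α × β)) := by
    ext ⟨a, b⟩
    simp
  rw [this, Set.ncard_coe_finset, Finset.card_map, Finset.card_sigma]

section FreeVariables

variable {k : Type*} [Field k] {n : ℕ}

theorem IsFreeVars.exists_coord_eq {S : AffineSubspace k (Fin n → k)} {J : Finset (Fin n)}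
    (hfree : IsFreeVars (S : Set (Fin n → k)) J) (i : Fin n) :
    ∃ c₀ : k, ∃ a : Fin n → k, ∀ x ∈ S, x i = c₀ + ∑ j ∈ J, a j * x j := by
  classical
  obtain ⟨p, ⟨hp, -⟩, -⟩ := hfree 0
  let π : S.direction →ₗ[k] J → k :=
    LinearMap.funLeft k k ((↑) : J → Fin n) ∘ₗ S.direction.subtype
  have hπ : Function.Bijective π := by
    constructor
    · intro v w hvw
      obtain ⟨x, -, hx⟩ := hfree (v + p)
      have hv : (v : Fin n → k) + p = x :=
        hx _ ⟨AffineSubspace.vadd_mem_of_mem_direction v.2 hp, fun _ _ => rfl⟩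
      have hw : (w : Fin n → k) + p = x := by
        refine hx _ ⟨AffineSubspace.vadd_mem_of_mem_direction w.2 hp, fun j hj => ?_⟩
        simpa [π] using (congrFun hvw ⟨j, hj⟩).symm
      exact Subtype.ext (add_right_cancel (hv.trans hw.symm))
    · intro u
      obtain ⟨x, ⟨hx, hxJ⟩, -⟩ := hfree fun j => if h : j ∈ J then u ⟨j, h⟩ + p j else 0
      refine ⟨⟨x - p, AffineSubspace.vsub_mem_direction hx hp⟩, funext fun j => ?_⟩
      simp [π, hxJ j j.2]
  let L : (J → k) →ₗ[k] k := LinearMap.proj i ∘ₗ S.direction.subtype ∘ₗ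
    (LinearEquiv.ofBijective π hπ).symm.toLinearMap
  let a : Fin n → k := fun j => L fun j' => if j = j' then 1 else 0
  refine ⟨p i - ∑ j ∈ J, a j * p j, a, fun x hx => ?_⟩
  let v : S.direction := ⟨x - p, AffineSubspace.vsub_mem_direction hx hp⟩
  have hv : (LinearEquiv.ofBijective π hπ).symm (π v) = v :=
    (LinearEquiv.ofBijective π hπ).symm_apply_apply v
  have hL : x i - p i = L (π v) := by simp [L, hv, v]
  have hsum : L (π v) = ∑ j ∈ J, a j * x j - ∑ j ∈ J, a j * p j := by
    rw [LinearMap.pi_apply_eq_sum_univ, ← Finset.sum_sub_distrib, ← Finset.sum_coe_sort J]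
    refine Finset.sum_congr rfl fun j _ => ?_
    simp only [π, v, a, LinearMap.comp_apply, LinearMap.funLeft_apply, Submodule.subtype_apply,
      Subtype.coe_inj, Pi.sub_apply, smul_eq_mul]
    ring
  linear_combination hL.trans hsum

theorem IsFreeVars.insert_erase {P : Set (Fin n → k)} {J : Finset (Fin n)}
    (hfree : IsFreeVars P J) {c₀ : k} {a : Fin n → k} {i j₀ : Fin n}
    (hrel : ∀ x ∈ P, x i = c₀ + ∑ j ∈ J, a j * x j) (hj₀ : j₀ ∈ J) (ha : a j₀ ≠ 0) :
    IsFreeVars P (insert i (J.erase j₀)) := by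
  classical
  intro v
  let t : k := (v i - c₀ - ∑ j ∈ J.erase j₀, a j * v j) / a j₀
  refine (existsUnique_congr fun y => and_congr_right fun hy => ?_).mp
    (hfree (Function.update v j₀ t))
  have hsplit : ∀ q : Fin n → Prop, (∀ j ∈ J, q j) ↔ q j₀ ∧ ∀ j ∈ J.erase j₀, q j := by
    intro q
    conv_lhs => rw [← Finset.insert_erase hj₀]
    exact Finset.forall_mem_insert _ _ _
  have hrest : (∀ j ∈ J.erase j₀, y j = Function.update v j₀ t j) ↔
      ∀ j ∈ J.erase j₀, y j = v j :=
    forall₂_congr fun j hj => by rw [Function.update_of_ne (Finset.ne_of_mem_erase hj)]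
  rw [hsplit, Finset.forall_mem_insert, Function.update_self, hrest]
  have hyi : (∀ j ∈ J.erase j₀, y j = v j) →
      y i = c₀ + a j₀ * y j₀ + ∑ j ∈ J.erase j₀, a j * v j := fun hy' => by
    rw [hrel y hy, ← Finset.add_sum_erase J _ hj₀,
      Finset.sum_congr rfl fun j hj => by rw [hy' j hj], add_assoc]
  constructor
  · rintro ⟨hyj₀, hy'⟩
    refine ⟨?_, hy'⟩
    rw [hyi hy', hyj₀, mul_div_cancel₀ _ ha]
    ring
  · rintro ⟨hvi, hy'⟩
    refine ⟨?_, hy'⟩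
    rw [eq_div_iff ha]
    linear_combination hvi - hyi hy'

end FreeVariables

section Components

variable {k : Type*} [Field k] {n : ℕ} {m : MonomialOrder (Fin n)}

theorem exists_mem_vanishingIdeal_degree_eq_single
    (hvar : ∀ i j : Fin n, i < j →
      m.toSyn (Finsupp.single i 1) < m.toSyn (Finsupp.single j 1))
    {S : AffineSubspace k (Fin n → k)} {J : Finset (Fin n)}
    (hmin : IsMinFreeVars (S : Set (Fin n → k)) J) {i : Fin n} (hi : i ∉ J) :
    ∃ g ∈ vanishingIdeal k (S : Set (Fin n → k)), g ≠ 0 ∧ m.degree g = Finsupp.single i 1 := by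
  obtain ⟨c₀, a, hrel⟩ := hmin.1.exists_coord_eq i
  have hlt : ∀ j ∈ J, a j ≠ 0 → j < i := fun j hj ha =>
    (ne_of_mem_of_not_mem hj hi).lt_or_gt.resolve_right fun hij =>
      hmin.2 j hj i hi hij (hmin.1.insert_erase hrel hj ha)
  have hsingle : Finsupp.single i 1 ≠ 0 := Finsupp.single_ne_zero.mpr one_ne_zero
  have h0 : 0 < m.toSyn (Finsupp.single i 1) :=
    (m.zero_le _).lt_of_ne' ((map_ne_zero_iff _ m.toSyn.injective).mpr hsingle)
  let q : MvPolynomial (Fin n) k := C c₀ + ∑ j ∈ J, C (a j) * X j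
  have hq : m.toSyn (m.degree q) < m.toSyn (Finsupp.single i 1) := by
    have hterm : ∀ j ∈ J, m.toSyn (m.degree (C (a j) * X j)) < m.toSyn (Finsupp.single i 1) := by
      intro j hj
      classical
      rw [C_mul_X_eq_monomial, m.degree_monomial]
      split_ifs with ha
      exacts [by rwa [map_zero], hvar j i (hlt j hj ha)]
    refine m.degree_add_le.trans_lt (max_lt (by rwa [m.degree_C, map_zero]) ?_)
    exact m.degree_sum_le.trans_lt ((Finset.sup_lt_iff (bot_le.trans_lt h0)).mpr hterm)
  have hdeg : m.degree (X i - q) = Finsupp.single i 1 := by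
    rw [m.degree_sub_of_lt (by rwa [m.degree_X]), m.degree_X]
  refine ⟨X i - q, ?_, m.ne_zero_of_degree_ne_zero (hdeg ▸ hsingle), hdeg⟩
  rw [mem_vanishingIdeal_iff]
  intro x hx
  simp [q, hrel x hx]

theorem exists_mem_vanishingIdeal_degree_support_subset
    (hvar : ∀ i j : Fin n, i < j →
      m.toSyn (Finsupp.single i 1) < m.toSyn (Finsupp.single j 1))
    {S : AffineSubspace k (Fin n → k)} {J J' : Finset (Fin n)}
    (hmin : IsMinFreeVars (S : Set (Fin n → k)) J') (hcard : J'.card = J.card) (hne : J' ≠ J) :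
    ∃ g ∈ vanishingIdeal k (S : Set (Fin n → k)), g ≠ 0 ∧ (m.degree g).support ⊆ J := by
  obtain ⟨i, hiJ, hiJ'⟩ : ∃ i ∈ J, i ∉ J' := by
    by_contra! h
    exact hne (Finset.eq_of_subset_of_card_le h hcard.le).symm
  obtain ⟨g, hg, hg0, hdeg⟩ := exists_mem_vanishingIdeal_degree_eq_single hvar hmin hiJ'
  refine ⟨g, hg, hg0, ?_⟩
  rw [hdeg]
  exact Finsupp.support_single_subset.trans (Finset.singleton_subset_iff.mpr hiJ)

theorem dPlane_subset_expD_of_subset_union {A A' : Set (Fin n → k)} {ι : Type*} (s : Finset ι)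
    (P : ι → Set (Fin n → k)) (hA : A ⊆ A' ∪ ⋃ c ∈ s, P c) {J : Finset (Fin n)}
    (hP : ∀ c ∈ s, ∃ g ∈ vanishingIdeal k (P c), g ≠ 0 ∧ (m.degree g).support ⊆ J)
    {γ : Fin n →₀ ℕ} (hsub : dPlane γ J ⊆ expD m (vanishingIdeal k A)) :
    dPlane γ J ⊆ expD m (vanishingIdeal k A') := by
  obtain ⟨h, hh, hh0, hhJ⟩ := exists_mem_vanishingIdeal_biUnion_degree_support_subset s hP
  intro β hβ hβC
  exact hsub (add_mem_dPlane hβ hhJ) (add_degree_mem_expC_vanishingIdeal hA hβC hh hh0)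

theorem dPlane_subset_expD_of_components
    (hvar : ∀ i j : Fin n, i < j →
      m.toSyn (Finsupp.single i 1) < m.toSyn (Finsupp.single j 1))
    {d : ℕ} {ι : Type*} [Fintype ι] (P : ι → Set (Fin n → k)) (Jc : ι → Finset (Fin n))
    (hP : ∀ c, IsAffineDPlane d (P c) ∧ (Jc c).card = d ∧ IsMinFreeVars (P c) (Jc c))
    {J : Finset (Fin n)} (hJ : J.card = d) {γ : Fin n →₀ ℕ}
    (hsub : dPlane γ J ⊆ expD m (vanishingIdeal k (⋃ c, P c))) :
    dPlane γ J ⊆ expD m (vanishingIdeal k (⋃ c ∈ {c | Jc c = J}, P c)) := by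
  classical
  refine dPlane_subset_expD_of_subset_union {c | Jc c ≠ J} P ?_ (fun c hc => ?_) hsub
  · refine Set.iUnion_subset fun c x hx => ?_
    by_cases hcJ : Jc c = J
    · exact Or.inl (Set.mem_biUnion hcJ hx)
    · exact Or.inr (Set.mem_biUnion (by simpa using hcJ) hx)
  · obtain ⟨⟨S, hS, -⟩, hcard, hmin⟩ := hP c
    rw [hS] at hmin ⊢
    exact exists_mem_vanishingIdeal_degree_support_subset hvar hmin (hcard.trans hJ.symm)
      (Finset.mem_filter.mp hc).2

end Components

theorem Eset_union_of_components_general {k : Type*} [Field k] {n d mm : ℕ}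
    (m : MonomialOrder (Fin n))
    (hvar : ∀ i j : Fin n, i < j →
      m.toSyn (Finsupp.single i 1) < m.toSyn (Finsupp.single j 1))
    (P : Fin mm → Set (Fin n → k)) (Jc : Fin mm → Finset (Fin n))
    (hP : ∀ c, IsAffineDPlane d (P c) ∧ (Jc c).card = d ∧ IsMinFreeVars (P c) (Jc c))
    (A : Set (Fin n → k)) (hA : A = ⋃ c, P c)
    (AJ : Finset (Fin n) → Set (Fin n → k))
    (hAJ : ∀ J, AJ J = ⋃ c ∈ {c | Jc c = J}, P c)
    (hEJ : ∀ J : Finset (Fin n), J.card = d →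
      ∃ Γ : Finset (Fin n →₀ ℕ),
        Γ.card = (Finset.univ.filter (fun c => Jc c = J)).card ∧
        (∀ γ ∈ Γ, ∀ j ∈ J, γ j = 0) ∧
        Eset d (expD m (MvPolynomial.vanishingIdeal k (AJ J))) = ⋃ γ ∈ Γ, dPlane γ J) :
    (Eset d (expD m (MvPolynomial.vanishingIdeal k A)) =
        ⋃ J ∈ {J : Finset (Fin n) | J.card = d},
          Eset d (expD m (MvPolynomial.vanishingIdeal k (AJ J)))) ∧
      (planesIn d (expD m (MvPolynomial.vanishingIdeal k A))).ncard = mm := by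
  classical
  have hD_sub : ∀ J, expD m (vanishingIdeal k (AJ J)) ⊆ expD m (vanishingIdeal k A) := by
    intro J
    refine expD_anti (vanishingIdeal_anti_mono ?_)
    rw [hA, hAJ]
    exact Set.iUnion₂_subset fun c _ => Set.subset_iUnion P c
  have hplane : ∀ J γ, (J, γ) ∈ planesIn d (expD m (vanishingIdeal k A)) →
      (J, γ) ∈ planesIn d (expD m (vanishingIdeal k (AJ J))) := by
    rintro J γ ⟨hJ, hγ, hsub⟩
    rw [hA] at hsub
    exact ⟨hJ, hγ, hAJ J ▸ dPlane_subset_expD_of_components hvar P Jc hP hJ hsub⟩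
  refine ⟨Eset_eq_biUnion_of_mem_planesIn hD_sub hplane, ?_⟩
  choose! Γ hΓcard hΓ0 hΓE using hEJ
  have hplanes : planesIn d (expD m (vanishingIdeal k A)) =
      {p | p.1 ∈ ({J | J.card = d} : Finset (Finset (Fin n))) ∧ p.2 ∈ Γ p.1} := by
    ext ⟨J, γ⟩
    by_cases hJ : J.card = d
    · simp only [Set.mem_ofPred_eq, Finset.mem_filter, Finset.mem_univ, true_and, hJ,
        ← mem_planesIn_iff_of_Eset_eq hJ (hΓ0 J hJ) (hΓE J hJ)]
      exact ⟨hplane J γ, (planesIn_mono (hD_sub J) ·)⟩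
    · simp [planesIn, hJ]
  rw [hplanes, Set.ncard_setOf_fst_mem_snd_mem,
    Finset.sum_congr rfl fun J hJ => hΓcard J (Finset.mem_filter.mp hJ).2,
    ← Finset.card_eq_sum_card_fiberwise fun c _ => by simpa using (hP c).2.1,
    Finset.card_univ, Fintype.card_fin]

/-- Decomposition lemma: if `A` is a union of affine `d`-planes, `A_J` the union of those
components with minimal free variables `{X_j : j ∈ J}`, and if each `E(A_J)` consists of
exactly `m_J` `d`-planes parallel to `⊕_{j∈J} ℕe_j`, then `E(A) = ⋃_J E(A_J)`; in
particular the number of `d`-planes in `D(A)` equals the total number of components. -/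
theorem Eset_union_of_components {k : Type*} [Field k] {n d mm : ℕ}
    (m : MonomialOrder (Fin n))
    (hvar : ∀ i j : Fin n, i < j →
      m.toSyn (Finsupp.single i 1) < m.toSyn (Finsupp.single j 1))
    (P : Fin mm → Set (Fin n → k)) (Jc : Fin mm → Finset (Fin n))
    (hP : ∀ c, IsAffineDPlane d (P c) ∧ (Jc c).card = d ∧ IsMinFreeVars (P c) (Jc c))
    (hdist : ∀ c c', P c = P c' → c = c')
    (A : Set (Fin n → k)) (hA : A = ⋃ c, P c)
    (AJ : Finset (Fin n) → Set (Fin n → k))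
    (hAJ : ∀ J, AJ J = ⋃ c ∈ {c | Jc c = J}, P c)
    (hEJ : ∀ J : Finset (Fin n), J.card = d →
      ∃ Γ : Finset (Fin n →₀ ℕ),
        Γ.card = (Finset.univ.filter (fun c => Jc c = J)).card ∧
        (∀ γ ∈ Γ, ∀ j ∈ J, γ j = 0) ∧
        Eset d (expD m (MvPolynomial.vanishingIdeal k (AJ J))) = ⋃ γ ∈ Γ, dPlane γ J) :
    (Eset d (expD m (MvPolynomial.vanishingIdeal k A)) =
        ⋃ J ∈ {J : Finset (Fin n) | J.card = d},
          Eset d (expD m (MvPolynomial.vanishingIdeal k (AJ J)))) ∧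
      (planesIn d (expD m (MvPolynomial.vanishingIdeal k A))).ncard = mm :=
  Eset_union_of_components_general m hvar P Jc hP A hA AJ hAJ hEJ
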